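/- arXiv:2308.15478 — 2 statements merged into one kernel-verified Lean document; each statement's English description precedes it below -/
import Mathlib

section
/- Let ω₁ and ω₂ be admissible penalties and let d ≥ 0. Then the infimum of ω₁(s₁) + ω₂(s₂) + σ² over all s₁ ≥ 1, s₂ ≥ 1, σ ≥ 0 satisfying s₁ σ s₂ = d equals inf_{z ≥ 1} ((ω₁ ⊕ ω₂)(z) + d²/z²), i.e. the scalar effective penalty of the joint penalty evaluated at d. -/
open Matrix Set

noncomputable section

/-- An admissible penalty: nonnegative, minimized at `ω 1 = 0`, strictly decreasing on `(0,1]`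
and strictly increasing on `[1,∞)`. -/
def Admissible (ω : ℝ → ℝ) : Prop :=
  (∀ x, 0 ≤ ω x) ∧ ω 1 = 0 ∧ StrictAntiOn ω (Set.Ioc 0 1) ∧ StrictMonoOn ω (Set.Ici 1)

/-- The scalar effective penalty `ω̃ v = inf_{z ≥ 1} (ω z + v² / z²)`. -/
def effPenalty (ω : ℝ → ℝ) (v : ℝ) : ℝ :=
  sInf ((fun z => ω z + v ^ 2 / z ^ 2) '' Set.Ici (1 : ℝ))

/-- The joint penalty `(ω₁ ⊕ ω₂) v = inf_{1 ≤ z ≤ v} (ω₁ z + ω₂ (v / z))`. -/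
def jointPenalty (ω₁ ω₂ : ℝ → ℝ) (v : ℝ) : ℝ :=
  sInf ((fun z => ω₁ z + ω₂ (v / z)) '' Set.Icc (1 : ℝ) v)

/-- The (unordered) singular values of a real `P × Q` matrix: square roots of the
eigenvalues of `Xᴴ X`. -/
def svals {P Q : ℕ} (X : Matrix (Fin P) (Fin Q) ℝ) (j : Fin Q) : ℝ :=
  Real.sqrt ((show (Xᵀ * X).IsHermitian by
    simpa using Matrix.isHermitian_conjTranspose_mul_self X).eigenvalues j)

/-- Singular values sorted in decreasing order: `svalsDesc X j` is the `j`-th largest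
singular value of `X`. -/
def svalsDesc {P Q : ℕ} (X : Matrix (Fin P) (Fin Q) ℝ) (j : Fin Q) : ℝ :=
  svals X (Tuple.sort (fun i => - svals X i) j)

/-- The spectral penalty `Ω_ω M = Σ_j ω (σ_j M)`. -/
def specPenalty (ω : ℝ → ℝ) {P : ℕ} (M : Matrix (Fin P) (Fin P) ℝ) : ℝ :=
  ∑ j, ω (svals M j)

/-- Frobenius norm squared. -/
def frobSq {P Q : ℕ} (X : Matrix (Fin P) (Fin Q) ℝ) : ℝ :=
  ∑ i, ∑ j, X i j ^ 2

/-- Euclidean norm of a vector. -/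
def enorm2 {P : ℕ} (v : Fin P → ℝ) : ℝ :=
  Real.sqrt (∑ j, v j ^ 2)

/-- The induced effective spectral penalty `Ω̃_g B = Σ_{j=1}^{min(P,Q)} g̃(σ_j B)`. -/
def effSpec (g : ℝ → ℝ) {P Q : ℕ} (B : Matrix (Fin P) (Fin Q) ℝ) : ℝ :=
  ∑ j : Fin (min P Q), effPenalty g (svalsDesc B (Fin.castLE (min_le_right P Q) j))

/-!
Both sides are infima of `ω₁ s₁ + ω₂ s₂ + σ²` over the same triples, taken in a different
order: the effective penalty of the joint penalty first fixes the product `z = s₁ s₂ ≥ 1`, which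
forces `σ = d / z`, and then splits `z` optimally as `s₁ · (z / s₁)`. Every feasible triple
arises this way, with `z = s₁ s₂`. Nonnegativity of the penalties keeps all infima bounded below.
-/

def threeFactorPenalty (ω₁ ω₂ : ℝ → ℝ) (d : ℝ) : ℝ :=
  sInf {t : ℝ | ∃ s₁ s₂ σ : ℝ, 1 ≤ s₁ ∧ 1 ≤ s₂ ∧ 0 ≤ σ ∧ s₁ * σ * s₂ = d ∧
    t = ω₁ s₁ + ω₂ s₂ + σ ^ 2}

theorem Admissible.nonneg {ω : ℝ → ℝ} (h : Admissible ω) (x : ℝ) : 0 ≤ ω x := h.1 x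

theorem effPenalty_le {g : ℝ → ℝ} (hg : ∀ x, 0 ≤ g x) (v : ℝ) {z : ℝ} (hz : 1 ≤ z) :
    effPenalty g v ≤ g z + v ^ 2 / z ^ 2 :=
  csInf_le ⟨0, forall_mem_image.2 fun w _ => by have := hg w; positivity⟩
    (mem_image_of_mem _ hz)

theorem le_effPenalty {g : ℝ → ℝ} {v c : ℝ} (h : ∀ z, 1 ≤ z → c ≤ g z + v ^ 2 / z ^ 2) :
    c ≤ effPenalty g v :=
  le_csInf (nonempty_Ici.image _) (forall_mem_image.2 h)

section

variable {ω₁ ω₂ : ℝ → ℝ}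

theorem jointPenalty_nonneg (h₁ : ∀ x, 0 ≤ ω₁ x) (h₂ : ∀ x, 0 ≤ ω₂ x) (v : ℝ) :
    0 ≤ jointPenalty ω₁ ω₂ v :=
  Real.sInf_nonneg <| forall_mem_image.2 fun w _ => add_nonneg (h₁ w) (h₂ (v / w))

theorem jointPenalty_mul_le (h₁ : ∀ x, 0 ≤ ω₁ x) (h₂ : ∀ x, 0 ≤ ω₂ x) {s₁ s₂ : ℝ}
    (hs₁ : 1 ≤ s₁) (hs₂ : 1 ≤ s₂) : jointPenalty ω₁ ω₂ (s₁ * s₂) ≤ ω₁ s₁ + ω₂ s₂ := by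
  have hbdd : BddBelow ((fun w => ω₁ w + ω₂ (s₁ * s₂ / w)) '' Icc 1 (s₁ * s₂)) :=
    ⟨0, forall_mem_image.2 fun w _ => add_nonneg (h₁ w) (h₂ _)⟩
  have hs₁_mem : s₁ ∈ Icc 1 (s₁ * s₂) := ⟨hs₁, le_mul_of_one_le_right (by linarith) hs₂⟩
  have h := csInf_le hbdd (mem_image_of_mem _ hs₁_mem)
  rwa [mul_div_cancel_left₀ s₂ (by linarith : s₁ ≠ 0)] at h

theorem le_jointPenalty {v c : ℝ} (hv : 1 ≤ v) (h : ∀ w ∈ Icc 1 v, c ≤ ω₁ w + ω₂ (v / w)) :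
    c ≤ jointPenalty ω₁ ω₂ v :=
  le_csInf ((nonempty_Icc.2 hv).image _) (forall_mem_image.2 h)

theorem threeFactorPenalty_le (h₁ : ∀ x, 0 ≤ ω₁ x) (h₂ : ∀ x, 0 ≤ ω₂ x) {s₁ s₂ σ : ℝ}
    (hs₁ : 1 ≤ s₁) (hs₂ : 1 ≤ s₂) (hσ : 0 ≤ σ) :
    threeFactorPenalty ω₁ ω₂ (s₁ * σ * s₂) ≤ ω₁ s₁ + ω₂ s₂ + σ ^ 2 := by
  refine csInf_le ⟨0, ?_⟩ ⟨s₁, s₂, σ, hs₁, hs₂, hσ, rfl, rfl⟩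
  rintro t ⟨s₁, s₂, σ, -, -, -, -, rfl⟩
  have := h₁ s₁
  have := h₂ s₂
  positivity

theorem le_threeFactorPenalty {d c : ℝ} (hd : 0 ≤ d)
    (h : ∀ s₁ s₂ σ, 1 ≤ s₁ → 1 ≤ s₂ → 0 ≤ σ → s₁ * σ * s₂ = d → c ≤ ω₁ s₁ + ω₂ s₂ + σ ^ 2) :
    c ≤ threeFactorPenalty ω₁ ω₂ d := by
  refine le_csInf ⟨_, 1, 1, d, le_rfl, le_rfl, hd, by ring, rfl⟩ ?_
  rintro t ⟨s₁, s₂, σ, hs₁, hs₂, hσ, hprod, rfl⟩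
  exact h s₁ s₂ σ hs₁ hs₂ hσ hprod

end

/-- The three-factor scalar problem `min ω₁(s₁) + ω₂(s₂) + σ²` subject to
`s₁ σ s₂ = d` has optimal value equal to the scalar effective penalty of the joint penalty
evaluated at `d`. -/
theorem three_factor_effective_penalty (ω₁ ω₂ : ℝ → ℝ)
    (hω₁ : Admissible ω₁) (hω₂ : Admissible ω₂) (d : ℝ) (hd : 0 ≤ d) :
    sInf {t : ℝ | ∃ s₁ s₂ σ : ℝ, 1 ≤ s₁ ∧ 1 ≤ s₂ ∧ 0 ≤ σ ∧ s₁ * σ * s₂ = d ∧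
        t = ω₁ s₁ + ω₂ s₂ + σ ^ 2} =
      effPenalty (jointPenalty ω₁ ω₂) d := by
  change threeFactorPenalty ω₁ ω₂ d = _
  apply le_antisymm
  · refine le_effPenalty fun z hz => ?_
    suffices threeFactorPenalty ω₁ ω₂ d - d ^ 2 / z ^ 2 ≤ jointPenalty ω₁ ω₂ z by linarith
    refine le_jointPenalty hz fun w ⟨hw, hwz⟩ => ?_
    have feasible := threeFactorPenalty_le hω₁.nonneg hω₂.nonneg hw
      ((one_le_div (by linarith)).2 hwz) (div_nonneg hd (by linarith) : 0 ≤ d / z)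
    rw [show w * (d / z) * (z / w) = d by field_simp, div_pow] at feasible
    linarith
  · refine le_threeFactorPenalty hd fun s₁ s₂ σ hs₁ hs₂ hσ hprod => ?_
    have hz : 1 ≤ s₁ * s₂ := one_le_mul_of_one_le_of_one_le hs₁ hs₂
    calc effPenalty (jointPenalty ω₁ ω₂) d
        ≤ jointPenalty ω₁ ω₂ (s₁ * s₂) + d ^ 2 / (s₁ * s₂) ^ 2 :=
          effPenalty_le (jointPenalty_nonneg hω₁.nonneg hω₂.nonneg) d hz
      _ = jointPenalty ω₁ ω₂ (s₁ * s₂) + σ ^ 2 := by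
          rw [← hprod]; field_simp
      _ ≤ ω₁ s₁ + ω₂ s₂ + σ ^ 2 := by
          gcongr; exact jointPenalty_mul_le hω₁.nonneg hω₂.nonneg hs₁ hs₂
end
end

section
/- Let ω be an admissible penalty. Then ω̃(v) = v² + o(v²) as v → 0⁺; precisely, lim_{v → 0⁺} ω̃(v)/v² = 1 (Proposition 3, second part). -/
open Matrix Set

noncomputable section

/-! The choice `z = 1` gives `ω̃(v) ≤ v²`. For the matching lower bound fix `z₀ > 1`: on `[1, z₀]`
the term `v²/z²` is at least `v²/z₀²`, and on `[z₀, ∞)` the term `ω z` is at least `ω z₀ > 0`,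
so `ω̃(v) ≥ v²/z₀²` as soon as `v²/z₀² ≤ ω z₀`, which holds for small `v`. Letting `z₀ → 1⁺`
squeezes `ω̃(v)/v²` to `1`. -/

open Filter Topology

section EffPenalty

variable {ω : ℝ → ℝ}

lemma bddBelow_effPenalty_image (hnn : ∀ x, 0 ≤ ω x) (v : ℝ) :
    BddBelow ((fun z => ω z + v ^ 2 / z ^ 2) '' Ici (1 : ℝ)) := by
  refine ⟨0, ?_⟩
  rintro _ ⟨z, -, rfl⟩
  have := hnn z
  positivity

lemma effPenalty_le_sq (hnn : ∀ x, 0 ≤ ω x) (h1 : ω 1 = 0) (v : ℝ) :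
    effPenalty ω v ≤ v ^ 2 := by
  simpa [effPenalty, h1] using
    csInf_le (bddBelow_effPenalty_image hnn v) (mem_image_of_mem _ self_mem_Ici)

lemma sq_div_le_effPenalty (hnn : ∀ x, 0 ≤ ω x) (hmono : MonotoneOn ω (Ici 1)) {z₀ v : ℝ}
    (hz₀ : 1 ≤ z₀) (hv : v ^ 2 / z₀ ^ 2 ≤ ω z₀) :
    v ^ 2 / z₀ ^ 2 ≤ effPenalty ω v := by
  refine le_csInf ⟨_, mem_image_of_mem _ self_mem_Ici⟩ ?_
  rintro _ ⟨z, hz, rfl⟩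
  rcases le_total z z₀ with hzz₀ | hz₀z
  · have hzpos : 0 < z := zero_lt_one.trans_le hz
    have : v ^ 2 / z₀ ^ 2 ≤ v ^ 2 / z ^ 2 := by gcongr
    linarith [hnn z]
  · have : ω z₀ ≤ ω z := hmono hz₀ (hz₀.trans hz₀z) hz₀z
    have : 0 ≤ v ^ 2 / z ^ 2 := by positivity
    linarith

end EffPenalty

lemma exists_one_lt_lt_one_div_sq {a : ℝ} (ha : a < 1) : ∃ z₀ : ℝ, 1 < z₀ ∧ a < 1 / z₀ ^ 2 := by
  have hcont : Tendsto (fun z : ℝ => 1 / z ^ 2) (𝓝[>] 1) (𝓝 1) := by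
    have : ContinuousAt (fun z : ℝ => 1 / z ^ 2) 1 := by fun_prop (disch := norm_num)
    refine tendsto_nhdsWithin_of_tendsto_nhds ?_
    convert this.tendsto
    norm_num
  obtain ⟨z₀, hz₀a, hz₀⟩ := ((hcont.eventually (lt_mem_nhds ha)).and self_mem_nhdsWithin).exists
  exact ⟨z₀, hz₀, hz₀a⟩

/-- Proposition 3, second part. `ω̃(v) = v² + o(v²)` as `v → 0⁺`, i.e.
`ω̃(v)/v² → 1`. -/
theorem effPenalty_quadratic_at_zero (ω : ℝ → ℝ) (hω : Admissible ω) :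
    Filter.Tendsto (fun v => effPenalty ω v / v ^ 2)
      (nhdsWithin 0 (Set.Ioi 0)) (nhds 1) := by
  obtain ⟨hnn, h1, -, hmono⟩ := hω
  have hpos : ∀ᶠ v in 𝓝[>] (0 : ℝ), 0 < v ^ 2 :=
    eventually_nhdsWithin_of_forall fun v hv => pow_pos hv 2
  refine tendsto_order.2 ⟨fun a ha => ?_, fun b hb => ?_⟩
  · obtain ⟨z₀, hz₀, haz₀⟩ := exists_one_lt_lt_one_div_sq ha
    have hωz₀ : 0 < ω z₀ := h1 ▸ hmono self_mem_Ici hz₀.le hz₀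
    have hsmall : ∀ᶠ v in 𝓝[>] (0 : ℝ), v ^ 2 / z₀ ^ 2 < ω z₀ := by
      have : Tendsto (fun v : ℝ => v ^ 2 / z₀ ^ 2) (𝓝[>] 0) (𝓝 0) := by
        simpa using ((continuous_pow 2).div_const (z₀ ^ 2)).tendsto (0 : ℝ) |>.mono_left
          nhdsWithin_le_nhds
      exact this.eventually (gt_mem_nhds hωz₀)
    filter_upwards [hpos, hsmall] with v hv hvz₀
    calc a < 1 / z₀ ^ 2 := haz₀
      _ = v ^ 2 / z₀ ^ 2 / v ^ 2 := by rw [div_div_cancel_left' hv.ne', one_div]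
      _ ≤ effPenalty ω v / v ^ 2 := by
        gcongr
        exact sq_div_le_effPenalty hnn hmono.monotoneOn hz₀.le hvz₀.le
  · filter_upwards [hpos] with v hv
    exact ((div_le_one hv).2 (effPenalty_le_sq hnn h1 v)).trans_lt hb
end
end
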